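/- arXiv:2509.18370 — 3 statements merged into one kernel-verified Lean document; each statement's English description precedes it below -/
import Mathlib

section
/- Let f(θ) = 2/cos(θ/2) + 1/(cos(θ/2)·sin(θ/2)) + tan(θ/2). Then for every θ with 0 < θ < π, one has f(θ) ≥ 3·√3. -/
/-! With `s = sin (θ/2)` and `c = cos (θ/2)` the ribbonlength is `(1 + s)² / (s c)`. Squaring and
using `c² = 1 - s²`, the bound reduces to the polynomial inequality `27 s² (1 - s²) ≤ (1 + s)⁴`,
whose difference factors as `(1 + s) (2 s - 1)² (7 s + 1)`; equality holds at `s = 1/2`,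
i.e. `θ = π/3`. -/

open Real

lemma sq_mul_one_sub_sq_le_one_add_pow_four {s : ℝ} (hs : 0 ≤ s) :
    27 * (s ^ 2 * (1 - s ^ 2)) ≤ (1 + s) ^ 4 := by
  have hfactor : (1 + s) ^ 4 - 27 * (s ^ 2 * (1 - s ^ 2)) = (1 + s) * (2 * s - 1) ^ 2 * (7 * s + 1) := by
    ring
  have : 0 ≤ (1 + s) * (2 * s - 1) ^ 2 * (7 * s + 1) := by positivity
  linarith

lemma three_mul_sqrt_three_mul_le_one_add_sq {s c : ℝ} (hs : 0 ≤ s) (hc : 0 ≤ c)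
    (hsc : s ^ 2 + c ^ 2 = 1) : 3 * √3 * (s * c) ≤ (1 + s) ^ 2 := by
  refine (pow_le_pow_iff_left₀ (by positivity) (by positivity) two_ne_zero).mp ?_
  calc (3 * √3 * (s * c)) ^ 2 = 27 * (s ^ 2 * (1 - s ^ 2)) := by
        rw [mul_pow, mul_pow, mul_pow, sq_sqrt (by norm_num), show c ^ 2 = 1 - s ^ 2 by linarith]
        ring
    _ ≤ (1 + s) ^ 4 := sq_mul_one_sub_sq_le_one_add_pow_four hs
    _ = ((1 + s) ^ 2) ^ 2 := by ring

lemma ribbonlength_eq_one_add_sin_sq_div {x : ℝ} (hs : sin x ≠ 0) (hc : cos x ≠ 0) :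
    2 / cos x + 1 / (cos x * sin x) + tan x = (1 + sin x) ^ 2 / (sin x * cos x) := by
  rw [tan_eq_sin_div_cos]
  field_simp
  ring

theorem ribbonlength_lower_bound (θ : ℝ) (h1 : 0 < θ) (h2 : θ < π) :
    3 * Real.sqrt 3 ≤
      2 / Real.cos (θ / 2) + 1 / (Real.cos (θ / 2) * Real.sin (θ / 2)) + Real.tan (θ / 2) := by
  have hs : 0 < sin (θ / 2) := sin_pos_of_pos_of_lt_pi (by linarith) (by linarith [pi_pos])
  have hc : 0 < cos (θ / 2) := cos_pos_of_mem_Ioo ⟨by linarith [pi_pos], by linarith⟩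
  rw [ribbonlength_eq_one_add_sin_sq_div hs.ne' hc.ne', le_div_iff₀ (mul_pos hs hc)]
  exact three_mul_sqrt_three_mul_le_one_add_sq hs.le hc.le (sin_sq_add_cos_sq _)
end

section
/- Let f(θ) = 2/cos(θ/2) + 1/(cos(θ/2)·sin(θ/2)) + tan(θ/2). Then f is strictly decreasing on the interval (0, π/3] and strictly increasing on the interval [π/3, π). -/
/-!
With `s = sin (θ/2)` and `c = cos (θ/2)` the ribbonlength is `(1 + s)² / (s c)`, whose square is
`ribbonSq s = (1 + s)³ / (s² (1 - s))`. The difference quotient of `ribbonSq` has numerator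
`(a + b)(1 - (a + b)) + ab (4 - 3(a + b) - 4ab)`, positive when `a, b ≤ 1/2` and negative when
`a, b ≥ 1/2`; since `s` increases with `θ` and equals `1/2` at `θ = π/3`, the claim follows.
-/

open Real Set

noncomputable def ribbonSq (s : ℝ) : ℝ := (1 + s) ^ 3 / (s ^ 2 * (1 - s))

lemma ribbonSq_sub_ribbonSq {a b : ℝ} (ha : a ≠ 0) (hb : b ≠ 0) (ha₁ : a ≠ 1) (hb₁ : b ≠ 1) :
    ribbonSq a - ribbonSq b =
      (b - a) * ((a + b) * (1 - (a + b)) + a * b * (4 - 3 * (a + b) - 4 * a * b)) /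
        (a ^ 2 * b ^ 2 * (1 - a) * (1 - b)) := by
  have ha₁' : 1 - a ≠ 0 := sub_ne_zero.2 ha₁.symm
  have hb₁' : 1 - b ≠ 0 := sub_ne_zero.2 hb₁.symm
  rw [ribbonSq, ribbonSq]
  field_simp
  ring

lemma strictAntiOn_ribbonSq : StrictAntiOn ribbonSq (Ioc 0 (1 / 2)) := by
  rintro a ⟨ha₀, ha⟩ b ⟨hb₀, hb⟩ hab
  rw [← sub_pos, ribbonSq_sub_ribbonSq ha₀.ne' hb₀.ne' (by linarith) (by linarith)]
  have hab₄ : a * b ≤ 1 / 4 := by nlinarith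
  have hnum : 0 < (a + b) * (1 - (a + b)) + a * b * (4 - 3 * (a + b) - 4 * a * b) :=
    add_pos_of_pos_of_nonneg (mul_pos (by linarith) (by linarith))
      (mul_nonneg (by positivity) (by linarith))
  exact div_pos (mul_pos (sub_pos.2 hab) hnum)
    (mul_pos (mul_pos (by positivity) (by linarith)) (by linarith))

lemma strictMonoOn_ribbonSq : StrictMonoOn ribbonSq (Ico (1 / 2) 1) := by
  rintro a ⟨ha, ha₁⟩ b ⟨hb, hb₁⟩ hab
  rw [← sub_neg, ribbonSq_sub_ribbonSq (by positivity) (by positivity) ha₁.ne hb₁.ne]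
  have hab₄ : 1 / 4 ≤ a * b := by nlinarith
  have hnum : (a + b) * (1 - (a + b)) + a * b * (4 - 3 * (a + b) - 4 * a * b) < 0 :=
    add_neg_of_neg_of_nonpos (mul_neg_of_pos_of_neg (by linarith) (by linarith))
      (mul_nonpos_of_nonneg_of_nonpos (by positivity) (by nlinarith))
  exact div_neg_of_neg_of_pos (mul_neg_of_pos_of_neg (sub_pos.2 hab) hnum)
    (mul_pos (mul_pos (by positivity) (by linarith)) (by linarith))

lemma ribbonSq_nonneg {s : ℝ} (hs : s ∈ Ioo 0 1) : 0 ≤ ribbonSq s := by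
  obtain ⟨hs₀, hs₁⟩ := hs
  have : 0 < 1 - s := by linarith
  unfold ribbonSq
  positivity

lemma ribbonlength_eq_sqrt_ribbonSq {x : ℝ} (hs : 0 < sin x) (hc : 0 < cos x) :
    2 / cos x + 1 / (cos x * sin x) + tan x = √(ribbonSq (sin x)) := by
  have hs₁ : 0 < 1 - sin x := by nlinarith [sin_sq_add_cos_sq x]
  rw [tan_eq_sin_div_cos, eq_comm, sqrt_eq_iff_mul_self_eq_of_pos (by positivity), ribbonSq]
  field_simp
  linear_combination (-(1 + sin x) ^ 3) * sin_sq_add_cos_sq x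

lemma strictMonoOn_sin_half : StrictMonoOn (fun θ => sin (θ / 2)) (Icc (-π) π) :=
  strictMonoOn_sin.comp (fun _ _ _ _ h => by linarith)
    fun θ hθ => ⟨by linarith [hθ.1], by linarith [hθ.2]⟩

lemma sin_pi_div_three_div_two : sin (π / 3 / 2) = 1 / 2 := by
  rw [div_div, show (3 : ℝ) * 2 = 6 by norm_num, sin_pi_div_six]

lemma mapsTo_sin_half_Ioc : MapsTo (fun θ => sin (θ / 2)) (Ioc 0 (π / 3)) (Ioc 0 (1 / 2)) := by
  rintro θ ⟨hθ₀, hθ⟩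
  refine ⟨sin_pos_of_pos_of_lt_pi (by linarith) (by linarith [pi_pos]), ?_⟩
  calc sin (θ / 2) ≤ sin (π / 3 / 2) :=
        strictMonoOn_sin_half.monotoneOn ⟨by linarith, by linarith⟩
          ⟨by linarith [pi_pos], by linarith [pi_pos]⟩ hθ
    _ = 1 / 2 := sin_pi_div_three_div_two

lemma mapsTo_sin_half_Ico : MapsTo (fun θ => sin (θ / 2)) (Ico (π / 3) π) (Ico (1 / 2) 1) := by
  rintro θ ⟨hθ, hθπ⟩
  have hθ₀ : 0 < θ := by linarith [pi_pos]
  constructor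
  · calc 1 / 2 = sin (π / 3 / 2) := sin_pi_div_three_div_two.symm
      _ ≤ sin (θ / 2) := strictMonoOn_sin_half.monotoneOn
          ⟨by linarith [pi_pos], by linarith [pi_pos]⟩ ⟨by linarith, by linarith⟩ hθ
  · calc sin (θ / 2) < sin (π / 2) :=
        strictMonoOn_sin_half ⟨by linarith, by linarith⟩ ⟨by linarith [pi_pos], le_rfl⟩ hθπ
      _ = 1 := sin_pi_div_two

theorem ribbonlength_antitone_monotone :
    StrictAntiOn
      (fun θ : ℝ =>
        2 / Real.cos (θ / 2) + 1 / (Real.cos (θ / 2) * Real.sin (θ / 2)) + Real.tan (θ / 2))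
      (Set.Ioc 0 (π / 3))
    ∧ StrictMonoOn
      (fun θ : ℝ =>
        2 / Real.cos (θ / 2) + 1 / (Real.cos (θ / 2) * Real.sin (θ / 2)) + Real.tan (θ / 2))
      (Set.Ico (π / 3) π) := by
  have hf : EqOn (fun θ => √(ribbonSq (sin (θ / 2))))
      (fun θ => 2 / cos (θ / 2) + 1 / (cos (θ / 2) * sin (θ / 2)) + tan (θ / 2)) (Ioo 0 π) :=
    fun θ ⟨hθ₀, hθπ⟩ => (ribbonlength_eq_sqrt_ribbonSq
      (sin_pos_of_pos_of_lt_pi (by linarith) (by linarith))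
      (cos_pos_of_mem_Ioo ⟨by linarith, by linarith⟩)).symm
  have hsin : StrictMonoOn (fun θ => sin (θ / 2)) (Ioo 0 π) :=
    strictMonoOn_sin_half.mono
      (Ioo_subset_Icc_self.trans (Icc_subset_Icc_left (by linarith [pi_pos])))
  have hIoc : Ioc 0 (π / 3) ⊆ Ioo 0 π := Ioc_subset_Ioo_right (by linarith [pi_pos])
  have hIco : Ico (π / 3) π ⊆ Ioo 0 π := Ico_subset_Ioo_left (by positivity)
  constructor
  · exact ((strictMonoOn_sqrt.comp_strictAntiOn strictAntiOn_ribbonSq fun s hs =>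
      ribbonSq_nonneg ⟨hs.1, by linarith [hs.2]⟩).comp_strictMonoOn
      (hsin.mono hIoc) mapsTo_sin_half_Ioc).congr (hf.mono hIoc)
  · exact ((strictMonoOn_sqrt.comp strictMonoOn_ribbonSq fun s hs =>
      ribbonSq_nonneg ⟨by linarith [hs.1], hs.2⟩).comp
      (hsin.mono hIco) mapsTo_sin_half_Ico).congr (hf.mono hIco)
end

section
/- Fix a natural number n. The set of real numbers { 2/cos(θ/2) + 1/(cos(θ/2)·sin(θ/2)) + tan(θ/2) + 2·n·d·(1 + sin(θ/2)) : 0 < θ < π, d > 0 } has greatest lower bound 3·√3. -/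
/-!
Writing `s = sin (θ / 2)` and `c = cos (θ / 2)`, the trigonometric part of the ribbonlength
is `(1 + s)² / (c s)`. Since `(1 + s)⁴ - 27 (1 - s²) s² = (1 + s) (2 s - 1)² (7 s + 1)`, it is at
least `3 √3`, with equality at `θ = π / 3`. The remaining term `2 n d (1 + s)` is nonnegative and
tends to `0` with `d`.
-/

open Real Filter Topology

lemma two_div_cos_add_one_div_cos_mul_sin_add_tan {x : ℝ} (hc : cos x ≠ 0) (hs : sin x ≠ 0) :
    2 / cos x + 1 / (cos x * sin x) + tan x = (1 + sin x) ^ 2 / (cos x * sin x) := by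
  rw [tan_eq_sin_div_cos]
  field_simp
  ring

lemma three_mul_sqrt_three_mul_cos_mul_sin_le {x : ℝ} (hs : 0 ≤ sin x) :
    3 * √3 * (cos x * sin x) ≤ (1 + sin x) ^ 2 := by
  rcases le_or_gt (cos x) 0 with hc | hc
  · have : 3 * √3 * (cos x * sin x) ≤ 0 :=
      mul_nonpos_of_nonneg_of_nonpos (by positivity) (mul_nonpos_of_nonpos_of_nonneg hc hs)
    exact this.trans (sq_nonneg _)
  · refine (pow_le_pow_iff_left₀ (by positivity) (by positivity) two_ne_zero).mp ?_
    have hcos : cos x ^ 2 = 1 - sin x ^ 2 := by linear_combination cos_sq_add_sin_sq x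
    have hfactor : 0 ≤ (1 + sin x) * (2 * sin x - 1) ^ 2 * (7 * sin x + 1) := by
      have := neg_one_le_sin x
      have : 0 ≤ 7 * sin x + 1 := by linarith
      positivity
    calc (3 * √3 * (cos x * sin x)) ^ 2 = 27 * (1 - sin x ^ 2) * sin x ^ 2 := by
          rw [mul_pow, mul_pow, mul_pow, sq_sqrt (by norm_num), hcos]
          ring
      _ ≤ ((1 + sin x) ^ 2) ^ 2 := by linarith [hfactor]

lemma three_mul_sqrt_three_le_two_div_cos_add_one_div_cos_mul_sin_add_tan {x : ℝ}
    (h0 : 0 < x) (hx : x < π / 2) :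
    3 * √3 ≤ 2 / cos x + 1 / (cos x * sin x) + tan x := by
  have hs : 0 < sin x := sin_pos_of_pos_of_lt_pi h0 (by linarith [pi_pos])
  have hc : 0 < cos x := cos_pos_of_mem_Ioo ⟨by linarith, hx⟩
  rw [two_div_cos_add_one_div_cos_mul_sin_add_tan hc.ne' hs.ne', le_div_iff₀ (by positivity)]
  exact three_mul_sqrt_three_mul_cos_mul_sin_le hs.le

lemma two_div_cos_add_one_div_cos_mul_sin_add_tan_pi_div_six :
    2 / cos (π / 6) + 1 / (cos (π / 6) * sin (π / 6)) + tan (π / 6) = 3 * √3 := by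
  have hc : cos (π / 6) ≠ 0 := by rw [cos_pi_div_six]; positivity
  have hs : sin (π / 6) ≠ 0 := by rw [sin_pi_div_six]; norm_num
  rw [two_div_cos_add_one_div_cos_mul_sin_add_tan hc hs, cos_pi_div_six, sin_pi_div_six]
  field_simp
  linear_combination (-3 : ℝ) * sq_sqrt (show (0 : ℝ) ≤ 3 by norm_num)

theorem ribbonlength_isGLB (n : ℕ) :
    IsGLB
      {r : ℝ | ∃ θ d : ℝ, 0 < θ ∧ θ < π ∧ 0 < d ∧
        r = 2 / Real.cos (θ / 2) + 1 / (Real.cos (θ / 2) * Real.sin (θ / 2))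
            + Real.tan (θ / 2) + 2 * n * d * (1 + Real.sin (θ / 2))}
      (3 * Real.sqrt 3) := by
  refine ⟨?_, fun b hb => ?_⟩
  · rintro r ⟨θ, d, hθ0, hθπ, hd, rfl⟩
    have hmin := three_mul_sqrt_three_le_two_div_cos_add_one_div_cos_mul_sin_add_tan
      (half_pos hθ0) (by linarith)
    have hsin := neg_one_le_sin (θ / 2)
    have hd_term : 0 ≤ 2 * n * d * (1 + sin (θ / 2)) := by
      have : 0 ≤ 1 + sin (θ / 2) := by linarith
      positivity
    linarith
  · have hmem : ∀ d : ℝ, 0 < d → b ≤ 3 * √3 + 3 * n * d := fun d hd => hb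
      ⟨π / 3, d, by positivity, by linarith [pi_pos], hd, by
        rw [show π / 3 / 2 = π / 6 by ring,
          two_div_cos_add_one_div_cos_mul_sin_add_tan_pi_div_six, sin_pi_div_six]
        ring⟩
    have hlim : Tendsto (fun d : ℝ => 3 * √3 + 3 * n * d) (𝓝[>] 0) (𝓝 (3 * √3)) := by
      refine tendsto_nhdsWithin_of_tendsto_nhds ?_
      simpa using ((continuous_const.mul continuous_id).const_add (3 * √3)).tendsto (0 : ℝ)
    exact ge_of_tendsto hlim (eventually_nhdsWithin_of_forall hmem)
end
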